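/- arXiv:2305.01317 — 3 statements merged into one kernel-verified Lean document; each statement's English description precedes it below -/
import Mathlib

section
/- Let γ ∈ ℝ, δ > 0, c' > 0. The equation 1 + (C - c')δ + e^{γ + δC} = 0 in the unknown C has the unique real solution C* = -(W(e^{γ + δc' - 1}) - δc' + 1)/δ, where W is the principal branch of the Lambert W function (i.e., W(z)e^{W(z)} = z for z ≥ 0). -/
/-! Put `s = -(1 + (C - c')δ)`. The equation says `e^{γ + δC} = s`, which (multiplying by `e^s`)
is equivalent to `s e^s = e^{γ + δc' - 1}`, since the exponents add up to `γ + δc' - 1`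
independently of `C`. As `y ↦ y e^y` is injective on `[0, ∞)` and negative on `(-∞, 0)`,
this forces `s = W(e^{γ + δc' - 1})`, which is linear in `C`. -/

open Real

lemma Real.exp_eq_iff_mul_exp_eq (t s : ℝ) : exp t = s ↔ s * exp s = exp (t + s) := by
  rw [exp_add, mul_left_inj' (exp_pos s).ne', eq_comm]

lemma Real.strictMonoOn_mul_exp : StrictMonoOn (fun y : ℝ => y * exp y) (Set.Ici 0) :=
  fun _ ha _ _ hab =>
    mul_lt_mul hab (exp_le_exp.2 hab.le) (exp_pos _) (ha.out.trans hab.le)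

lemma Real.mul_exp_eq_mul_exp_iff {s w : ℝ} (hw : 0 ≤ w) :
    s * exp s = w * exp w ↔ s = w := by
  refine ⟨fun h => ?_, fun h => h ▸ rfl⟩
  have hs : 0 ≤ s := by
    by_contra! hs
    have : s * exp s < 0 := mul_neg_of_neg_of_pos hs (exp_pos s)
    nlinarith [exp_pos w]
  exact strictMonoOn_mul_exp.injOn hs hw h

theorem stmt_3_general (γ δ c' : ℝ) (hδ : 0 < δ)
    (W : ℝ → ℝ) (hW : ∀ x : ℝ, 0 ≤ x → 0 ≤ W x ∧ W x * Real.exp (W x) = x) :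
    ∀ C : ℝ,
      1 + (C - c') * δ + Real.exp (γ + δ * C) = 0 ↔
        C = -(W (Real.exp (γ + δ * c' - 1)) - δ * c' + 1) / δ := by
  intro C
  obtain ⟨hw_nonneg, hw⟩ := hW (exp (γ + δ * c' - 1)) (exp_pos _).le
  set w := W (exp (γ + δ * c' - 1))
  set s := -(1 + (C - c') * δ)
  have hsum : γ + δ * C + s = γ + δ * c' - 1 := by simp only [s]; ring
  calc 1 + (C - c') * δ + exp (γ + δ * C) = 0
      ↔ exp (γ + δ * C) = s := by constructor <;> intro h <;> linarith
    _ ↔ s * exp s = exp (γ + δ * C + s) := exp_eq_iff_mul_exp_eq _ _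
    _ ↔ s * exp s = w * exp w := by rw [hsum, hw]
    _ ↔ s = w := mul_exp_eq_mul_exp_iff hw_nonneg
    _ ↔ C = -(w - δ * c' + 1) / δ := by
      rw [eq_div_iff hδ.ne']; constructor <;> intro h <;> linarith

/-- The equation `1 + (C - c')δ + e^{γ + δC} = 0` has the unique real solution
`C* = -(W(e^{γ + δc' - 1}) - δc' + 1)/δ` where `W` is the principal Lambert W
function (the inverse of `y ↦ y e^y` on `[0, ∞)`). -/
theorem stmt_3 (γ δ c' : ℝ) (hδ : 0 < δ) (hc' : 0 < c')
    (W : ℝ → ℝ) (hW : ∀ x : ℝ, 0 ≤ x → 0 ≤ W x ∧ W x * Real.exp (W x) = x) :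
    ∀ C : ℝ,
      1 + (C - c') * δ + Real.exp (γ + δ * C) = 0 ↔
        C = -(W (Real.exp (γ + δ * c' - 1)) - δ * c' + 1) / δ :=
  stmt_3_general γ δ c' hδ W hW
end

section
/- Let α ∈ [0,1], β > 0, c' > 0 with βc' ≥ α and α + β·(c'/2 - α/(2β)) ≤ 1. Then the minimum expected-cost contribution of an offer under the linear acceptance model, min_{C ≥ 0} [P(C)·C + (1-P(C))·c'] with P(C) = min(α + βC,1) for C > 0 and P(0) = 0, equals c' - (βc' + α)²/(4β). -/
/-!
Once an offer `C > 0` is made, the cost `p C + (1 - p) c'` with `p = α + β C` is the parabola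
`m + β (C - C*)²`, where `C* = c'/2 - α/(2β)` and `m = c' - (βc' + α)²/(4β)`; where the
acceptance probability is capped at `1` the cost is `C`, which exceeds either `c'` or the
parabola. So `m` is a lower bound. Conversely `C* ≥ 0`, the cap is inactive at `C*`, and the
capped cost is continuous, so `m` is attained at `C*` or approached as `C → 0⁺`.
-/

open Set

namespace LinearAcceptance

variable {α β c' : ℝ}

def cappedCost (α β c' C : ℝ) : ℝ :=
  min (α + β * C) 1 * C + (1 - min (α + β * C) 1) * c'

lemma continuous_cappedCost : Continuous (cappedCost α β c') := by
  unfold cappedCost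
  fun_prop

lemma uncappedCost_eq (hβ : β ≠ 0) (C : ℝ) :
    (α + β * C) * C + (1 - (α + β * C)) * c' =
      c' - (β * c' + α) ^ 2 / (4 * β) + β * (C - (c' / 2 - α / (2 * β))) ^ 2 := by
  field_simp
  ring

lemma le_uncappedCost (hβ : 0 < β) (C : ℝ) :
    c' - (β * c' + α) ^ 2 / (4 * β) ≤ (α + β * C) * C + (1 - (α + β * C)) * c' := by
  rw [uncappedCost_eq hβ.ne']
  have : 0 ≤ β * (C - (c' / 2 - α / (2 * β))) ^ 2 := by positivity
  linarith

lemma le_cappedCost (hβ : 0 < β) (C : ℝ) :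
    c' - (β * c' + α) ^ 2 / (4 * β) ≤ cappedCost α β c' C := by
  have hq := le_uncappedCost (c' := c') (α := α) hβ C
  unfold cappedCost
  rcases le_or_gt (α + β * C) 1 with hcap | hcap
  · rwa [min_eq_left hcap]
  · rw [min_eq_right hcap.le]
    rcases le_or_gt C c' with hC | hC
    · nlinarith [mul_nonneg (sub_nonneg.2 hcap.le) (sub_nonneg.2 hC)]
    · have : 0 ≤ (β * c' + α) ^ 2 / (4 * β) := by positivity
      linarith

lemma cappedCost_optimal (hβ : 0 < β) (hsat : α + β * (c' / 2 - α / (2 * β)) ≤ 1) :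
    cappedCost α β c' (c' / 2 - α / (2 * β)) = c' - (β * c' + α) ^ 2 / (4 * β) := by
  rw [cappedCost, min_eq_left hsat, uncappedCost_eq hβ.ne', sub_self]
  ring

end LinearAcceptance

open LinearAcceptance in
theorem stmt_11_general (α β c' : ℝ) (hβ : 0 < β)
    (hαβ : α ≤ β * c') (hsat : α + β * (c' / 2 - α / (2 * β)) ≤ 1)
    (P : ℝ → ℝ) (hP : ∀ C : ℝ, P C = if C = 0 then 0 else min (α + β * C) 1) :
    IsGLB ((fun C : ℝ => P C * C + (1 - P C) * c') '' {C : ℝ | 0 ≤ C})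
      (c' - (β * c' + α) ^ 2 / (4 * β)) := by
  have hcost : ∀ C ≠ 0, P C * C + (1 - P C) * c' = cappedCost α β c' C := fun C hC => by
    rw [hP, if_neg hC, cappedCost]
  refine isGLB_of_mem_closure ?_ ?_
  · rintro _ ⟨C, -, rfl⟩
    rcases eq_or_ne C 0 with rfl | hC
    · have : 0 ≤ (β * c' + α) ^ 2 / (4 * β) := by positivity
      simpa [hP] using this
    · exact (le_cappedCost hβ C).trans_eq (hcost C hC).symm
  · have hopt : c' / 2 - α / (2 * β) ∈ closure (Ioi 0) := by
      rw [closure_Ioi, mem_Ici, sub_nonneg, div_le_div_iff₀ (by positivity) two_pos]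
      linarith
    have himage : cappedCost α β c' '' Ioi 0 ⊆
        (fun C : ℝ => P C * C + (1 - P C) * c') '' {C : ℝ | 0 ≤ C} := by
      rintro _ ⟨C, hC : 0 < C, rfl⟩
      exact ⟨C, hC.le, hcost C hC.ne'⟩
    refine closure_mono himage (image_closure_subset_closure_image continuous_cappedCost ?_)
    exact ⟨_, hopt, cappedCost_optimal hβ hsat⟩

/-- The minimum (infimum) expected-cost contribution of an offer under the linear
acceptance model equals `c' - (βc' + α)²/(4β)`. -/
theorem stmt_11 (α β c' : ℝ) (hα0 : 0 ≤ α) (hα1 : α ≤ 1) (hβ : 0 < β) (hc' : 0 < c')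
    (hαβ : α ≤ β * c') (hsat : α + β * (c' / 2 - α / (2 * β)) ≤ 1)
    (P : ℝ → ℝ) (hP : ∀ C : ℝ, P C = if C = 0 then 0 else min (α + β * C) 1) :
    IsGLB ((fun C : ℝ => P C * C + (1 - P C) * c') '' {C : ℝ | 0 ≤ C})
      (c' - (β * c' + α) ^ 2 / (4 * β)) :=
  stmt_11_general α β c' hβ hαβ hsat P hP
end

section
/- Let γ ∈ ℝ, δ > 0, c' > 0, and f(C) = (C - c')/(1 + e^{-(γ + δC)}). Let C* be the unique real zero of h(C) = 1 + (C - c')δ + e^{γ + δC}. Then f is strictly decreasing on (-∞, C*) and strictly increasing on (C*, ∞), so C* is the unique global minimizer of f on ℝ. -/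
/-!
Writing `u = e^{-(γ + δC)}`, the quotient rule and `u e^{γ + δC} = 1` give
`f'(C) = u / (1 + u)² · h(C)`. Since `δ > 0`, `h` is strictly increasing, so `f'` is negative
left of the zero `C*` of `h` and positive right of it.
-/

open Real Set

theorem strictAntiOn_Iic_of_hasDerivAt_neg {f f' : ℝ → ℝ} {a : ℝ}
    (hf : ∀ x, HasDerivAt f (f' x) x) (hf' : ∀ x < a, f' x < 0) : StrictAntiOn f (Iic a) := by
  refine strictAntiOn_of_deriv_neg (convex_Iic a)
    (fun x _ => (hf x).continuousAt.continuousWithinAt) fun x hx => ?_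
  rw [(hf x).deriv]
  exact hf' x (by simpa using hx)

theorem strictMonoOn_Ici_of_hasDerivAt_pos {f f' : ℝ → ℝ} {a : ℝ}
    (hf : ∀ x, HasDerivAt f (f' x) x) (hf' : ∀ x, a < x → 0 < f' x) :
    StrictMonoOn f (Ici a) := by
  refine strictMonoOn_of_deriv_pos (convex_Ici a)
    (fun x _ => (hf x).continuousAt.continuousWithinAt) fun x hx => ?_
  rw [(hf x).deriv]
  exact hf' x (by simpa using hx)

theorem strictAntiOn_strictMonoOn_lt_of_hasDerivAt_mul {f g h : ℝ → ℝ} {a : ℝ}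
    (hf : ∀ x, HasDerivAt f (g x * h x) x) (hg : ∀ x, 0 < g x) (hh : StrictMono h)
    (ha : h a = 0) :
    StrictAntiOn f (Iic a) ∧ StrictMonoOn f (Ici a) ∧ ∀ x, x ≠ a → f a < f x := by
  have hanti : StrictAntiOn f (Iic a) := strictAntiOn_Iic_of_hasDerivAt_neg hf fun x hx =>
    mul_neg_of_pos_of_neg (hg x) (ha ▸ hh hx)
  have hmono : StrictMonoOn f (Ici a) := strictMonoOn_Ici_of_hasDerivAt_pos hf fun x hx =>
    mul_pos (hg x) (ha ▸ hh hx)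
  refine ⟨hanti, hmono, fun x hx => ?_⟩
  rcases hx.lt_or_gt with hlt | hgt
  · exact hanti hlt.le self_mem_Iic hlt
  · exact hmono self_mem_Ici hgt.le hgt

section Logistic

variable (γ δ c' : ℝ)

theorem hasDerivAt_div_one_add_exp_neg (C : ℝ) :
    HasDerivAt (fun C : ℝ => (C - c') / (1 + exp (-(γ + δ * C))))
      (exp (-(γ + δ * C)) / (1 + exp (-(γ + δ * C))) ^ 2 *
        (1 + (C - c') * δ + exp (γ + δ * C))) C := by
  have hlin : HasDerivAt (fun C : ℝ => -(γ + δ * C)) (-δ) C := by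
    simpa only [mul_one] using (((hasDerivAt_id' C).const_mul δ).const_add γ).fun_neg
  have hden : HasDerivAt (fun C : ℝ => 1 + exp (-(γ + δ * C)))
      (exp (-(γ + δ * C)) * (-δ)) C := hlin.exp.const_add 1
  have hnum : HasDerivAt (fun C : ℝ => C - c') 1 C := (hasDerivAt_id C).sub_const c'
  refine (hnum.fun_div hden (by positivity)).congr_deriv ?_
  have hinv : exp (-(γ + δ * C)) * exp (γ + δ * C) = 1 := by
    rw [← exp_add, neg_add_cancel, exp_zero]
  field_simp
  linear_combination -hinv

variable {δ}

theorem strictMono_one_add_mul_add_exp (hδ : 0 < δ) :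
    StrictMono fun C : ℝ => 1 + (C - c') * δ + exp (γ + δ * C) := by
  have hlin : StrictMono fun C : ℝ => 1 + (C - c') * δ := fun x y hxy => by
    dsimp only
    nlinarith
  exact hlin.add (exp_strictMono.comp fun x y hxy => by
    change γ + δ * x < γ + δ * y
    nlinarith)

end Logistic

theorem stmt_15_general (γ δ c' : ℝ) (hδ : 0 < δ)
    (Cstar : ℝ) (hCstar : 1 + (Cstar - c') * δ + Real.exp (γ + δ * Cstar) = 0) :
    StrictAntiOn (fun C : ℝ => (C - c') / (1 + Real.exp (-(γ + δ * C)))) (Set.Iio Cstar) ∧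
    StrictMonoOn (fun C : ℝ => (C - c') / (1 + Real.exp (-(γ + δ * C)))) (Set.Ioi Cstar) ∧
    ∀ C : ℝ, C ≠ Cstar →
      (Cstar - c') / (1 + Real.exp (-(γ + δ * Cstar))) <
        (C - c') / (1 + Real.exp (-(γ + δ * C))) := by
  obtain ⟨hanti, hmono, hmin⟩ := strictAntiOn_strictMonoOn_lt_of_hasDerivAt_mul
    (hasDerivAt_div_one_add_exp_neg γ δ c') (fun C => by positivity)
    (strictMono_one_add_mul_add_exp γ c' hδ) hCstar
  exact ⟨hanti.mono Iio_subset_Iic_self, hmono.mono Ioi_subset_Ici_self, hmin⟩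

/-- If `C*` is the (unique) real zero of `h(C) = 1 + (C - c')δ + e^{γ + δC}`, then
`f(C) = (C - c')/(1 + e^{-(γ + δC)})` is strictly decreasing on `(-∞, C*)`, strictly
increasing on `(C*, ∞)`, and `C*` is its unique global minimizer on `ℝ`. -/
theorem stmt_15 (γ δ c' : ℝ) (hδ : 0 < δ) (hc' : 0 < c')
    (Cstar : ℝ) (hCstar : 1 + (Cstar - c') * δ + Real.exp (γ + δ * Cstar) = 0) :
    StrictAntiOn (fun C : ℝ => (C - c') / (1 + Real.exp (-(γ + δ * C)))) (Set.Iio Cstar) ∧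
    StrictMonoOn (fun C : ℝ => (C - c') / (1 + Real.exp (-(γ + δ * C)))) (Set.Ioi Cstar) ∧
    ∀ C : ℝ, C ≠ Cstar →
      (Cstar - c') / (1 + Real.exp (-(γ + δ * Cstar))) <
        (C - c') / (1 + Real.exp (-(γ + δ * C))) :=
  stmt_15_general γ δ c' hδ Cstar hCstar
end
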